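/- For any tree T and any maximum-weight bn-independent broadcast f on T, no leaf of T hears f from any vertex of degree at least 2. -/

import Mathlib

open SimpleGraph Finset
open scoped Classical

noncomputable section

/-- Eccentricity of a vertex. -/
def gecc {V : Type*} (G : SimpleGraph V) [Fintype V] (v : V) : ℕ :=
  Finset.univ.sup fun u => G.dist v u

/-- A broadcast: `f v ≤ e(v)` for all `v`. -/
def IsBroadcast {V : Type*} (G : SimpleGraph V) [Fintype V] (f : V → ℕ) : Prop :=
  ∀ v, f v ≤ gecc G v

/-- `u` hears `f` from `v`. -/
def Hears {V : Type*} (G : SimpleGraph V) (f : V → ℕ) (u v : V) : Prop :=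
  0 < f v ∧ G.dist u v ≤ f v

/-- Boundary independent broadcast: a vertex hearing two or more broadcasting
vertices lies in the boundary of each. -/
def BnIndep {V : Type*} (G : SimpleGraph V) [Fintype V] (f : V → ℕ) : Prop :=
  IsBroadcast G f ∧
    ∀ w v₁ v₂, v₁ ≠ v₂ → Hears G f w v₁ → Hears G f w v₂ → G.dist w v₁ = f v₁

/-- Weight of a broadcast. -/
def bweight {V : Type*} [Fintype V] (f : V → ℕ) : ℕ := ∑ v, f v

/-- The boundary independence number. -/
def alphaBn {V : Type*} (G : SimpleGraph V) [Fintype V] : ℕ :=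
  sSup {w | ∃ f, BnIndep G f ∧ bweight f = w}

/-- Set of branch vertices (degree at least 3). -/
def branchSet {V : Type*} (G : SimpleGraph V) [Fintype V] : Finset V :=
  Finset.univ.filter fun v => 3 ≤ G.degree v

/-- `l` is a leaf joined to `v` by an endpath (all internal vertices of degree 2). -/
def IsEndpathTo {V : Type*} (G : SimpleGraph V) [Fintype V] (v l : V) : Prop :=
  G.degree l = 1 ∧ ∃ p : G.Walk v l, p.IsPath ∧
    ∀ u ∈ p.support, u ≠ v → u ≠ l → G.degree u = 2

/-- Leaf set `L(v)` of a vertex `v`. -/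
def leafSet {V : Type*} (G : SimpleGraph V) [Fintype V] (v : V) : Finset V :=
  Finset.univ.filter fun l => IsEndpathTo G v l

/-- `R(T)`: branch vertices with at most one leaf in their leaf set. -/
def rset {V : Type*} (G : SimpleGraph V) [Fintype V] : Finset V :=
  (branchSet G).filter fun v => (leafSet G v).card ≤ 1

/-- Edge `uv` is covered by broadcasting vertex `x`. -/
def Covers {V : Type*} (G : SimpleGraph V) (f : V → ℕ) (x u v : V) : Prop :=
  0 < f x ∧ G.Adj u v ∧ G.dist u x ≤ f x ∧ G.dist v x ≤ f x ∧
    (G.dist u x < f x ∨ G.dist v x < f x)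

/-- The graph `G - U_f^E` obtained by deleting all `f`-uncovered edges. -/
def coveredSubgraph {V : Type*} (G : SimpleGraph V) (f : V → ℕ) : SimpleGraph V where
  Adj u v := G.Adj u v ∧ ∃ x, Covers G f x u v
  symm := ⟨by
    rintro u v ⟨h, x, h1, h2, h3, h4, h5⟩
    exact ⟨h.symm, x, h1, h2.symm, h4, h3, h5.symm⟩⟩
  loopless := ⟨by rintro u ⟨h, -⟩; exact G.loopless.irrefl u h⟩

/-- `f` is a maximal bn-independent broadcast. -/
def MaximalBn {V : Type*} (G : SimpleGraph V) [Fintype V] (f : V → ℕ) : Prop :=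
  BnIndep G f ∧ ∀ g, BnIndep G g → (∀ v, f v ≤ g v) → g = f

/-- The `f`-private boundary of `v`: vertices of `N_f(v)` not dominated once the
broadcast strength of `v` is lowered by one. -/
def privBoundary {V : Type*} (G : SimpleGraph V) (f : V → ℕ) (v : V) : Set V :=
  {u | G.dist u v ≤ f v ∧ ∀ x, ¬ Hears G (Function.update f v (f v - 1)) u x}

/-- The branch representation: branch vertices adjacent iff the path between them
contains no other branch vertex. -/
def branchRep {V : Type*} (G : SimpleGraph V) [Fintype V] : SimpleGraph V where
  Adj b₁ b₂ := b₁ ≠ b₂ ∧ 3 ≤ G.degree b₁ ∧ 3 ≤ G.degree b₂ ∧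
    ∀ p : G.Walk b₁ b₂, p.IsPath → ∀ u ∈ p.support, 3 ≤ G.degree u → u = b₁ ∨ u = b₂
  symm := ⟨by
    rintro a b ⟨hab, ha, hb, h⟩
    refine ⟨hab.symm, hb, ha, fun p hp u hu hdeg => ?_⟩
    have hu' : u ∈ p.reverse.support := by
      rw [SimpleGraph.Walk.support_reverse]; exact List.mem_reverse.mpr hu
    exact (h p.reverse hp.reverse u hu' hdeg).symm⟩
  loopless := ⟨by rintro v ⟨h, -⟩; exact h rfl⟩

/-- Hearing independent broadcast. -/
def HIndep {V : Type*} (G : SimpleGraph V) [Fintype V] (f : V → ℕ) : Prop :=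
  IsBroadcast G f ∧ ∀ u v, u ≠ v → 0 < f u → 0 < f v → f v < G.dist u v

/-- The hearing independence number. -/
def alphaH {V : Type*} (G : SimpleGraph V) [Fintype V] : ℕ :=
  sSup {w | ∃ f, HIndep G f ∧ bweight f = w}

/-- Diameter. -/
def gdiam {V : Type*} (G : SimpleGraph V) [Fintype V] : ℕ :=
  Finset.univ.sup fun v => gecc G v


/-!
On a tree, bn-independence says exactly that `f x + f y ≤ d(x, y)` for distinct broadcasting
vertices `x, y`. Suppose a leaf `l` hears a vertex `v` of degree at least two, at distance
`d ≤ f v`; since `l` is a leaf, every other broadcasting vertex `y` satisfies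
`f v + f y + 2 ≤ d(l, v) + d(l, y)`. We rearrange `f` into a bn-independent broadcast of weight
`σ(f) + 1`. If some `z` with `d(v, z) = f v + 1 - d` is at distance more than `f v` from `l`,
replace the broadcast from `v` by broadcasts of strength `f v + 2 - d` from `l` and `d - 1`
from `z`. Otherwise every vertex at distance at least `f v + 1 - d` from `v` lies on the side
of the neighbour of `v` towards `l`; then `v` has another neighbour `t`, and moving the
broadcast from `v` to `t` with strength `f v + 1` works.
-/

namespace SimpleGraph

variable {V : Type*} {G : SimpleGraph V}

theorem Connected.exists_dist_eq_add (hc : G.Connected) {u w : V} {j : ℕ}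
    (hj : j ≤ G.dist u w) : ∃ m, G.dist u m = j ∧ G.dist u w = j + G.dist m w := by
  obtain ⟨p, -, hp⟩ := hc.exists_path_of_dist u w
  refine ⟨p.getVert j, ?_, ?_⟩
  · rw [← length_eq_dist_of_subwalk hp (p.isSubwalk_take j)]
    simp [hp, hj]
  · rw [← length_eq_dist_of_subwalk hp (p.isSubwalk_drop j)]
    simp only [Walk.drop_length, hp]
    omega

theorem Connected.exists_adj_dist_add_one (hc : G.Connected) {u w : V} (h : u ≠ w) :
    ∃ m, G.Adj u m ∧ G.dist u w = G.dist m w + 1 := by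
  obtain ⟨m, hum, hm⟩ := hc.exists_dist_eq_add (hc.pos_dist_of_ne h)
  exact ⟨m, dist_eq_one_iff_adj.1 hum, by omega⟩

theorem Connected.dist_eq_dist_add_one_of_unique_adj (hc : G.Connected) {l b y : V}
    (hl : ∀ x, G.Adj l x → x = b) (hy : y ≠ l) : G.dist l y = G.dist b y + 1 := by
  obtain ⟨m, hlm, hly⟩ := hc.exists_adj_dist_add_one hy.symm
  rwa [hl m hlm] at hly

theorem Connected.dist_add_two_le_of_unique_adj (hc : G.Connected) {l b x y : V}
    (hl : ∀ x, G.Adj l x → x = b) (hx : x ≠ l) (hy : y ≠ l) :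
    G.dist x y + 2 ≤ G.dist l x + G.dist l y := by
  have := hc.dist_eq_dist_add_one_of_unique_adj hl hx
  have := hc.dist_eq_dist_add_one_of_unique_adj hl hy
  have : G.dist x y ≤ G.dist x b + G.dist b y := hc.dist_triangle
  simp only [dist_comm (G := G)] at *
  omega

theorem IsTree.eq_of_adj_of_dist_add_one (hT : G.IsTree) {v t t' w : V} (ht : G.Adj v t)
    (ht' : G.Adj v t') (hwt : G.dist w v = G.dist w t + 1) (hwt' : G.dist w v = G.dist w t' + 1) :
    t = t' := by
  obtain ⟨q, hq, -⟩ := hT.connected.exists_path_of_dist w v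
  have mem_q : ∀ {t}, G.Adj v t → G.dist w v = G.dist w t + 1 → t ∈ q.support := by
    intro t ht hwt
    by_contra hnot
    obtain ⟨p, hp, hpl⟩ := hT.connected.exists_path_of_dist w t
    have hvp := hT.isAcyclic.mem_support_of_ne_mem_support_of_adj_of_isPath hp hq ht.symm hnot
    have := dist_le (p.takeUntil v hvp)
    have := p.length_takeUntil_le_length hvp
    omega
  rw [hT.isAcyclic.eq_penultimate_of_adj_end hq ht (mem_q ht hwt),
    hT.isAcyclic.eq_penultimate_of_adj_end hq ht' (mem_q ht' hwt')]

/-- If the edge `vt` separates `z` (on the side of `t`) from `z'` (on the side of `v`),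
then the geodesic from `z` to `z'` runs through `v`. -/
theorem IsTree.dist_eq_add_of_adj (hT : G.IsTree) {v t z z' : V} (ht : G.Adj v t)
    (hz : G.dist v z = G.dist t z + 1) (hz' : G.dist t z' = G.dist v z' + 1) :
    G.dist z z' = G.dist z v + G.dist v z' := by
  have hc := hT.connected
  have hvt : G.dist v t = 1 := dist_eq_one_iff_adj.2 ht
  induction hn : G.dist t z generalizing z with
  | zero =>
    obtain rfl : t = z := (hc.dist_eq_zero_iff).1 hn
    simp only [dist_comm (G := G)] at *
    omega
  | succ n ih =>
    obtain ⟨u, hzu, hzt⟩ := hc.exists_adj_dist_add_one (u := z) (w := t)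
      (by rintro rfl; simp at hn)
    have htu : G.dist t u = n := by rw [dist_comm, dist_comm (u := u)] at hzt; omega
    have hvu : G.dist v u = G.dist t u + 1 := by
      have : G.dist v u ≤ G.dist v t + G.dist t u := hc.dist_triangle
      rcases hT.dist_eq_dist_add_one_of_adj v hzu with h | h <;> omega
    have huz' := ih hvu htu
    rcases hT.dist_eq_dist_add_one_of_adj z' hzu with h | h
    · simp only [dist_comm (G := G)] at *
      omega
    · -- then `z` and the neighbour `u'` of `u` towards `v` would both be closer to `z'` than `u`
      exfalso
      obtain ⟨u', huu', hu'v⟩ := hc.exists_adj_dist_add_one (u := u) (w := v)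
        (by rintro rfl; simp at hvu)
      have hu'z' : G.dist z' u = G.dist z' u' + 1 := by
        have : G.dist z' u' ≤ G.dist z' v + G.dist v u' := hc.dist_triangle
        have : G.dist z' u ≤ G.dist z' u' + G.dist u' u := hc.dist_triangle
        have := dist_eq_one_iff_adj.2 huu'
        simp only [dist_comm (G := G)] at *
        omega
      obtain rfl : z = u' := hT.eq_of_adj_of_dist_add_one hzu.symm huu' h hu'z'
      simp only [dist_comm (G := G)] at *
      omega

theorem IsTree.dist_eq_add_of_adj_of_adj (hT : G.IsTree) {v t t' z z' : V} (ht : G.Adj v t)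
    (ht' : G.Adj v t') (htt' : t ≠ t') (hz : G.dist v z = G.dist t z + 1)
    (hz' : G.dist v z' = G.dist t' z' + 1) :
    G.dist z z' = G.dist z v + G.dist v z' := by
  refine hT.dist_eq_add_of_adj ht hz ?_
  rcases hT.dist_eq_dist_add_one_of_adj z' ht with h | h
  · refine absurd (hT.eq_of_adj_of_dist_add_one (w := z') ht ht' h ?_) htt'
    simp only [dist_comm (G := G)] at *
    omega
  · simp only [dist_comm (G := G)] at *
    omega

/-- If no vertex at distance `j` from `v` lies beyond `v` as seen from `l`, then every vertex at
distance at least `j` from `v` lies on the side of `s`, the neighbour of `v` towards `l`. -/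
theorem IsTree.dist_eq_dist_add_one_of_forall_lt (hT : G.IsTree) {v s t l : V} (hs : G.Adj v s)
    (hsl : G.dist v l = G.dist s l + 1) (ht : G.Adj v t) (hts : t ≠ s) {j : ℕ}
    (hnear : ∀ m, G.dist v m = j → G.dist l m < G.dist l v + j) {z : V} (hz : j ≤ G.dist v z) :
    G.dist t z = G.dist v z + 1 := by
  rcases hT.dist_eq_dist_add_one_of_adj z ht with h | h
  · exfalso
    have hzl := hT.dist_eq_add_of_adj_of_adj ht hs hts (by rw [dist_comm, h, dist_comm]) hsl
    obtain ⟨m, hvm, hvz⟩ := hT.connected.exists_dist_eq_add hz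
    have := hnear m hvm
    have : G.dist l z ≤ G.dist l m + G.dist m z := hT.connected.dist_triangle
    simp only [dist_comm (G := G)] at *
    omega
  · simp only [dist_comm (G := G)] at *
    omega

end SimpleGraph

open Function

section Separated

variable {V : Type*} {G : SimpleGraph V}

def PairwiseSeparated (G : SimpleGraph V) (f : V → ℕ) : Prop :=
  ∀ x y, x ≠ y → 0 < f x → 0 < f y → f x + f y ≤ G.dist x y

theorem PairwiseSeparated.mono {f g : V → ℕ} (hf : PairwiseSeparated G f) (hgf : g ≤ f) :
    PairwiseSeparated G g := fun x y hxy hx hy =>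
  (add_le_add (hgf x) (hgf y)).trans (hf x y hxy (hx.trans_le (hgf x)) (hy.trans_le (hgf y)))

theorem PairwiseSeparated.update {f : V → ℕ} (hf : PairwiseSeparated G f) {a : V} {n : ℕ}
    (ha : ∀ y, y ≠ a → 0 < f y → n + f y ≤ G.dist a y) :
    PairwiseSeparated G (update f a n) := by
  intro x y hxy hx hy
  rcases eq_or_ne x a with rfl | hxa
  · simp only [update_self, update_of_ne hxy.symm] at hy ⊢
    exact ha y hxy.symm hy
  rcases eq_or_ne y a with rfl | hya
  · simp only [update_self, update_of_ne hxy] at hx ⊢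
    rw [add_comm, dist_comm]
    exact ha x hxy hx
  simp only [update_of_ne hxa, update_of_ne hya] at hx hy ⊢
  exact hf x y hxy hx hy

theorem PairwiseSeparated.eq_zero_of_hears {f : V → ℕ} (hf : PairwiseSeparated G f) {u v : V}
    (huv : u ≠ v) (h : Hears G f u v) : f u = 0 := by
  by_contra hu
  have := hf u v huv (Nat.pos_of_ne_zero hu) h.1
  have := h.2
  omega

theorem PairwiseSeparated.add_add_two_le_of_hears (hc : G.Connected) {f : V → ℕ}
    (hf : PairwiseSeparated G f) {l b v y : V} (hl : ∀ x, G.Adj l x → x = b) (hlv : l ≠ v)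
    (hv : Hears G f l v) (hyv : y ≠ v) (hy : 0 < f y) :
    f v + f y + 2 ≤ G.dist l v + G.dist l y := by
  have hyl : y ≠ l := by rintro rfl; simp [hf.eq_zero_of_hears hlv hv] at hy
  have := hc.dist_add_two_le_of_unique_adj hl hlv.symm hyl
  have := hf v y hyv.symm hv.1 hy
  omega

end Separated

section Broadcast

variable {V : Type*} [Fintype V] {G : SimpleGraph V}

theorem dist_le_gecc (v u : V) : G.dist v u ≤ gecc G v :=
  Finset.le_sup (f := G.dist v) (mem_univ u)

theorem exists_dist_eq_gecc (G : SimpleGraph V) (v : V) : ∃ w, G.dist v w = gecc G v := by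
  obtain ⟨w, -, hw⟩ := Finset.exists_mem_eq_sup univ ⟨v, mem_univ v⟩ (G.dist v)
  exact ⟨w, hw.symm⟩

theorem IsBroadcast.update {f : V → ℕ} (hf : IsBroadcast G f) {a : V} {n : ℕ}
    (hn : n ≤ gecc G a) : IsBroadcast G (update f a n) := by
  intro x
  rcases eq_or_ne x a with rfl | hx
  · simpa using hn
  · simpa [hx] using hf x

theorem bnIndep_iff (hc : G.Connected) {f : V → ℕ} :
    BnIndep G f ↔ IsBroadcast G f ∧ PairwiseSeparated G f := by
  refine ⟨fun ⟨hb, hbn⟩ => ⟨hb, fun x y hxy hx hy => ?_⟩,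
    fun ⟨hb, hs⟩ => ⟨hb, ?_⟩⟩
  · by_contra! hlt
    by_cases hxy' : G.dist x y ≤ f y
    · have := hbn x x y hxy ⟨hx, by simp⟩ ⟨hy, hxy'⟩
      simp at this
      omega
    · obtain ⟨m, hxm, hmy⟩ := hc.exists_dist_eq_add (u := x) (w := y) (j := G.dist x y - f y)
        (by omega)
      have := hbn m x y hxy ⟨hx, by rw [dist_comm]; omega⟩ ⟨hy, by omega⟩
      rw [dist_comm] at this
      omega
  · intro w x y hxy hx hy
    have := hs x y hxy hx.1 hy.1
    have : G.dist x y ≤ G.dist x w + G.dist w y := hc.dist_triangle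
    have := hx.2
    have := hy.2
    simp only [dist_comm (G := G)] at *
    omega

theorem bweight_update (f : V → ℕ) (a : V) (n : ℕ) :
    bweight (update f a n) + f a = bweight f + n := by
  simp only [bweight, Finset.sum_update_of_mem (mem_univ a),
    ← Finset.sum_erase_add univ f (mem_univ a), sdiff_singleton_eq_erase]
  omega

theorem bweight_le_of_eq_alphaBn {f g : V → ℕ} (hf : bweight f = alphaBn G) (hg : BnIndep G g) :
    bweight g ≤ bweight f :=
  hf ▸ le_csSup ⟨∑ u, gecc G u, by
    rintro _ ⟨h, hh, rfl⟩
    exact Finset.sum_le_sum fun u _ => hh.1 u⟩ ⟨g, hg, rfl⟩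

end Broadcast

section Improvement

variable {V : Type*} [Fintype V] {G : SimpleGraph V} {f : V → ℕ}

theorem exists_heavier_shift_to_adj (hb : IsBroadcast G f) (hs : PairwiseSeparated G f) {v t : V}
    (hv : 0 < f v) (ht : G.Adj v t)
    (hfar : ∀ y, y ≠ v → 0 < f y → G.dist t y = G.dist v y + 1)
    (hecc : f v + 1 ≤ gecc G t) :
    ∃ g, IsBroadcast G g ∧ PairwiseSeparated G g ∧ bweight g = bweight f + 1 := by
  have hft : f t = 0 := by
    by_contra h
    simpa using hfar t ht.ne' (Nat.pos_of_ne_zero h)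
  refine ⟨update (update f v 0) t (f v + 1), (hb.update (Nat.zero_le _)).update hecc,
    (hs.mono (update_le_self_iff.2 (Nat.zero_le _))).update fun y hyt hy => ?_, ?_⟩
  · have hyv : y ≠ v := by rintro rfl; simp at hy
    rw [update_of_ne hyv] at hy ⊢
    have := hs v y hyv.symm hv hy
    have := hfar y hyv hy
    omega
  · have := bweight_update (update f v 0) t (f v + 1)
    have := bweight_update f v 0
    rw [update_of_ne ht.ne', hft] at *
    omega

theorem exists_heavier_split_to_leaf (hc : G.Connected) (hb : IsBroadcast G f)
    (hs : PairwiseSeparated G f) {l b v z : V} (hl : ∀ x, G.Adj l x → x = b) (hlv : l ≠ v)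
    (hv : Hears G f l v) (hz : G.dist v z + G.dist l v = f v + 1) (hlz : f v + 1 ≤ G.dist l z) :
    ∃ g, IsBroadcast G g ∧ PairwiseSeparated G g ∧ bweight g = bweight f + 1 := by
  set d := G.dist l v
  have hd : 1 ≤ d := hc.pos_dist_of_ne hlv
  have hdv : d ≤ f v := hv.2
  have hfl : f l = 0 := hs.eq_zero_of_hears hlv hv
  have hzv : z ≠ v := by rintro rfl; simp at hz; omega
  have hzl : z ≠ l := by rintro rfl; simp at hlz
  have hfz : f z = 0 := by
    by_contra h
    have := hs v z hzv.symm hv.1 (Nat.pos_of_ne_zero h)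
    omega
  have hg₁ : ∀ y, y ≠ l → y ≠ v → update (update f v 0) l (f v + 2 - d) y = f y :=
    fun y hyl hyv => by simp [hyl, hyv]
  refine ⟨update (update (update f v 0) l (f v + 2 - d)) z (d - 1), ?_, ?_, ?_⟩
  · have := dist_le_gecc (G := G) l z
    have := dist_le_gecc (G := G) z l
    rw [dist_comm] at this
    exact ((hb.update (Nat.zero_le _)).update (by omega)).update (by omega)
  · refine ((hs.mono (update_le_self_iff.2 (Nat.zero_le _))).update fun y hyl hy => ?_).update
      fun y hyz hy => ?_
    · have hyv : y ≠ v := by rintro rfl; simp at hy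
      rw [update_of_ne hyv] at hy ⊢
      have := hs.add_add_two_le_of_hears hc hl hlv hv hyv hy
      omega
    · rcases eq_or_ne y l with rfl | hyl
      · simp only [update_self]
        rw [SimpleGraph.dist_comm]
        omega
      · have hyv : y ≠ v := by rintro rfl; simp [hyl] at hy
        rw [hg₁ y hyl hyv] at hy ⊢
        have := hs v y hyv.symm hv.1 hy
        have : G.dist v y ≤ G.dist v z + G.dist z y := hc.dist_triangle
        omega
  · have h₁ := bweight_update (update (update f v 0) l (f v + 2 - d)) z (d - 1)
    have h₂ := bweight_update (update f v 0) l (f v + 2 - d)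
    have h₃ := bweight_update f v 0
    rw [hg₁ z hzl hzv, hfz] at h₁
    rw [update_of_ne hlv, hfl] at h₂
    omega

end Improvement

/-- In any maximum-weight bn-independent broadcast on a tree, no leaf hears the
broadcast from a vertex of degree at least 2. -/
theorem stmt6 {V : Type*} [Fintype V] (T : SimpleGraph V) (hT : T.IsTree)
    (f : V → ℕ) (hf : BnIndep T f) (hmax : bweight f = alphaBn T) :
    ∀ l v : V, T.degree l = 1 → 2 ≤ T.degree v → ¬ Hears T f l v := by
  intro l v hl hv hhear
  have hc := hT.connected
  obtain ⟨hb, hs⟩ := (bnIndep_iff hc).1 hf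
  obtain ⟨b, -, hlb⟩ := degree_eq_one_iff_existsUnique_adj.1 hl
  have hlv : l ≠ v := by rintro rfl; omega
  suffices ∃ g, IsBroadcast T g ∧ PairwiseSeparated T g ∧ bweight g = bweight f + 1 by
    obtain ⟨g, hgb, hgs, hgw⟩ := this
    have := bweight_le_of_eq_alphaBn hmax ((bnIndep_iff hc).2 ⟨hgb, hgs⟩)
    omega
  by_cases hsplit : ∃ z, T.dist v z + T.dist l v = f v + 1 ∧ f v + 1 ≤ T.dist l z
  · obtain ⟨z, hz, hlz⟩ := hsplit
    exact exists_heavier_split_to_leaf hc hb hs hlb hlv hhear hz hlz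
  push Not at hsplit
  obtain ⟨s, hvs, hsl⟩ := hc.exists_adj_dist_add_one hlv.symm
  obtain ⟨t, hvt, hts⟩ :=
    Finset.exists_mem_ne (hv.trans_eq (card_neighborFinset_eq_degree T v).symm) s
  rw [mem_neighborFinset] at hvt
  have hfar : ∀ z, f v + 1 - T.dist l v ≤ T.dist v z → T.dist t z = T.dist v z + 1 :=
    fun z => hT.dist_eq_dist_add_one_of_forall_lt hvs hsl hvt hts
      (fun m hm => by have := hhear.2; have := hsplit m (by omega); omega)
  obtain ⟨w, hw⟩ := exists_dist_eq_gecc T v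
  refine exists_heavier_shift_to_adj hb hs hhear.1 hvt (fun y hyv hy => hfar y ?_) ?_
  · have := hs v y hyv.symm hhear.1 hy
    omega
  · have := hb v
    have := hc.pos_dist_of_ne hlv
    have := hfar w (by omega)
    have := dist_le_gecc (G := T) t w
    omega
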